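/- With x, α as above and p = max ⌢(x,α): if p is a response then p is the unique element of x ∩ A(α), and if p is a query then p is the unique element of α ∩ A(x); here A(x) = { q = rc : r ∈ x, q is a query in P, and there is no v with qv ∈ x }, and symmetrically A(α) = { r = qv : q ∈ α, r a response in P, no c with rc ∈ α }. -/

import Mathlib

universe u v

variable {C : Type u} {V : Type v}

/-- A word over cells (inl) and values (inr) is alternating, starting with a cell,
when even positions are cells and odd positions are values. -/
def Alternating (w : List (C ⊕ V)) : Prop :=
  ∀ i (h : i < w.length),
    (i % 2 = 0 → (w.get ⟨i, h⟩).isLeft = true) ∧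
    (i % 2 = 1 → (w.get ⟨i, h⟩).isRight = true)

/-- P is the set of positions of a sequential data structure: non-empty
alternating words starting with a cell, closed under non-empty prefixes. -/
def IsSDS (P : Set (List (C ⊕ V))) : Prop :=
  (∀ p ∈ P, p ≠ []) ∧ (∀ p ∈ P, Alternating p) ∧
  (∀ p ∈ P, ∀ q, q <+: p → q ≠ [] → q ∈ P)

/-- A response: a position of even length (ending with a value). -/
def IsResponse (P : Set (List (C ⊕ V))) (r : List (C ⊕ V)) : Prop :=
  r ∈ P ∧ r.length % 2 = 0

/-- A query: a position of odd length (ending with a cell). -/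
def IsQuery (P : Set (List (C ⊕ V))) (q : List (C ⊕ V)) : Prop :=
  q ∈ P ∧ q.length % 2 = 1


/-- Longest common prefix (greatest lower bound for the prefix order). -/
def lcp {α : Type _} [DecidableEq α] : List α → List α → List α
  | a :: as, b :: bs => if a = b then a :: lcp as bs else []
  | _, _ => []

/-- A strategy: a set of responses closed under response prefixes and under
binary non-empty greatest lower bounds. -/
def IsStrategy [DecidableEq C] [DecidableEq V]
    (P : Set (List (C ⊕ V))) (x : Set (List (C ⊕ V))) : Prop :=
  (∀ r ∈ x, IsResponse P r) ∧
  (∀ r ∈ x, ∀ r', r' <+: r → IsResponse P r' → r' ∈ x) ∧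
  (∀ r₁ ∈ x, ∀ r₂ ∈ x, lcp r₁ r₂ ≠ [] → lcp r₁ r₂ ∈ x)

/-- A counter-strategy: a non-empty set of queries closed under query prefixes
and under binary greatest lower bounds. -/
def IsCounterStrategy [DecidableEq C] [DecidableEq V]
    (P : Set (List (C ⊕ V))) (α : Set (List (C ⊕ V))) : Prop :=
  α.Nonempty ∧
  (∀ q ∈ α, IsQuery P q) ∧
  (∀ q ∈ α, ∀ q', q' <+: q → IsQuery P q' → q' ∈ α) ∧
  (∀ q₁ ∈ α, ∀ q₂ ∈ α, lcp q₁ q₂ ≠ [] → lcp q₁ q₂ ∈ α)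

/-- The play of x against α: positions all of whose response prefixes are in x
and all of whose query prefixes are in α. -/
def play (P x α : Set (List (C ⊕ V))) : Set (List (C ⊕ V)) :=
  {p | p ∈ P ∧ (∀ r, r <+: p → IsResponse P r → r ∈ x) ∧
       (∀ q, q <+: p → IsQuery P q → q ∈ α)}

/-- A(x): queries accessible from the strategy x. -/
def AccS (P x : Set (List (C ⊕ V))) : Set (List (C ⊕ V)) :=
  {q | IsQuery P q ∧ (q.dropLast = [] ∨ q.dropLast ∈ x) ∧
       ∀ v : V, q ++ [Sum.inr v] ∉ x}

/-- A(α): responses accessible from the counter-strategy α. -/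
def AccC (P α : Set (List (C ⊕ V))) : Set (List (C ⊕ V)) :=
  {r | IsResponse P r ∧ r.dropLast ∈ α ∧ ∀ c : C, r ++ [Sum.inl c] ∉ α}

/-!
Along the play, responses are contributed by `x` and queries by `α`, and the play stops at its
maximum `m` exactly when the player to move has no continuation: if `m` is a response, `α`
has no query `m c`, so `m ∈ A(α)`; if `m` is a query, `x` has no response `m v`, so
`m ∈ A(x)`. Conversely, prefix closure puts every element `p` of `x ∩ A(α)` (resp. `α ∩ A(x)`)
into the play, so `p` is a prefix of `m`; were it a proper one, the next letter of `m` after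
`p` would be the continuation of `p` that accessibility of `p` rules out.
-/

theorem List.IsPrefix.prefix_dropLast_of_ne {α : Type*} {q p : List α} (h : q <+: p)
    (hne : q ≠ p) : q <+: p.dropLast := by
  have hlt : q.length < p.length := h.length_le.lt_of_ne fun hl => hne (h.eq_of_length hl)
  exact List.prefix_of_prefix_length_le h p.dropLast_prefix (by rw [List.length_dropLast]; omega)

theorem Alternating.exists_inl_of_snoc {p : List (C ⊕ V)} {a : C ⊕ V}
    (h : Alternating (p ++ [a])) (hp : p.length % 2 = 0) : ∃ c, a = Sum.inl c := by
  have hleft := (h p.length (by simp)).1 hp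
  rw [List.get_eq_getElem, List.getElem_concat_length rfl] at hleft
  exact Sum.isLeft_iff.mp hleft

theorem Alternating.exists_inr_of_snoc {p : List (C ⊕ V)} {a : C ⊕ V}
    (h : Alternating (p ++ [a])) (hp : p.length % 2 = 1) : ∃ v, a = Sum.inr v := by
  have hright := (h p.length (by simp)).2 hp
  rw [List.get_eq_getElem, List.getElem_concat_length rfl] at hright
  exact Sum.isRight_iff.mp hright

section Positions

variable {P : Set (List (C ⊕ V))}

theorem IsResponse.not_isQuery {w : List (C ⊕ V)} (hr : IsResponse P w) : ¬IsQuery P w :=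
  fun hq => by have := hr.2; have := hq.2; omega

theorem IsResponse.isQuery_dropLast (hP : IsSDS P) {r : List (C ⊕ V)} (hr : IsResponse P r) :
    IsQuery P r.dropLast := by
  have hlen : 2 ≤ r.length := by
    have := List.length_pos_of_ne_nil (hP.1 r hr.1); have := hr.2; omega
  refine ⟨hP.2.2 r hr.1 _ r.dropLast_prefix ?_, ?_⟩
  · rw [← List.length_pos_iff, List.length_dropLast]; omega
  · rw [List.length_dropLast]; have := hr.2; omega

theorem IsQuery.dropLast_eq_nil_or_isResponse (hP : IsSDS P) {q : List (C ⊕ V)}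
    (hq : IsQuery P q) : q.dropLast = [] ∨ IsResponse P q.dropLast := by
  rcases eq_or_ne q.dropLast [] with h | h
  · exact .inl h
  · refine .inr ⟨hP.2.2 q hq.1 _ q.dropLast_prefix h, ?_⟩
    rw [List.length_dropLast]; have := hq.2; omega

end Positions

section Play

variable {P x α : Set (List (C ⊕ V))}

theorem mem_play_of_prefix (hP : IsSDS P) {p q : List (C ⊕ V)} (hp : p ∈ play P x α)
    (hqp : q <+: p) (hq : q ≠ []) : q ∈ play P x α :=
  ⟨hP.2.2 p hp.1 q hqp hq, fun r hr => hp.2.1 r (hr.trans hqp),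
    fun r hr => hp.2.2 r (hr.trans hqp)⟩

theorem snoc_mem_play {m : List (C ⊕ V)} {a : C ⊕ V} (hm : m ∈ play P x α)
    (hP : m ++ [a] ∈ P) (hx : IsResponse P (m ++ [a]) → m ++ [a] ∈ x)
    (hα : IsQuery P (m ++ [a]) → m ++ [a] ∈ α) : m ++ [a] ∈ play P x α := by
  refine ⟨hP, fun r hr => ?_, fun q hq => ?_⟩
  · rcases List.prefix_concat_iff.mp hr with rfl | hr
    exacts [hx, hm.2.1 r hr]
  · rcases List.prefix_concat_iff.mp hq with rfl | hq
    exacts [hα, hm.2.2 q hq]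

theorem snoc_not_mem_play_of_max {m : List (C ⊕ V)} (hmax : ∀ p ∈ play P x α, p <+: m)
    (a : C ⊕ V) : m ++ [a] ∉ play P x α :=
  fun h => by simpa using (hmax _ h).length_le

theorem eq_of_mem_play_of_snoc_not_mem (hP : IsSDS P) {m p : List (C ⊕ V)}
    (hm : m ∈ play P x α) (hmax : ∀ p ∈ play P x α, p <+: m) (hp : p ∈ play P x α)
    (hsnoc : ∀ a, p ++ [a] ∉ play P x α) : p = m := by
  have hpm := hmax p hp
  refine hpm.eq_of_length (hpm.length_le.eq_of_not_lt fun hlt => ?_)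
  exact hsnoc _ (mem_play_of_prefix hP hm (List.concat_get_prefix hpm hlt) (by simp))

theorem mem_accC_of_play_max (hP : IsSDS P) (hα : ∀ q ∈ α, IsQuery P q) {m : List (C ⊕ V)}
    (hm : m ∈ play P x α) (hmax : ∀ p ∈ play P x α, p <+: m) (hr : IsResponse P m) :
    m ∈ AccC P α := by
  refine ⟨hr, hm.2.2 _ m.dropLast_prefix (hr.isQuery_dropLast hP), fun c hc => ?_⟩
  refine snoc_not_mem_play_of_max hmax _ (snoc_mem_play hm (hα _ hc).1 ?_ fun _ => hc)
  exact fun h => absurd (hα _ hc) h.not_isQuery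

theorem mem_accS_of_play_max (hP : IsSDS P) (hx : ∀ r ∈ x, IsResponse P r) {m : List (C ⊕ V)}
    (hm : m ∈ play P x α) (hmax : ∀ p ∈ play P x α, p <+: m) (hq : IsQuery P m) :
    m ∈ AccS P x := by
  refine ⟨hq, (hq.dropLast_eq_nil_or_isResponse hP).imp_right
    (hm.2.1 _ m.dropLast_prefix), fun v hv => ?_⟩
  refine snoc_not_mem_play_of_max hmax _ (snoc_mem_play hm (hx _ hv).1 (fun _ => hv) ?_)
  exact fun h => absurd h (hx _ hv).not_isQuery

theorem mem_play_of_mem_accC (hx : ∀ r ∈ x, ∀ r', r' <+: r → IsResponse P r' → r' ∈ x)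
    (hα : ∀ q ∈ α, ∀ q', q' <+: q → IsQuery P q' → q' ∈ α) {p : List (C ⊕ V)} (hpx : p ∈ x)
    (hp : p ∈ AccC P α) : p ∈ play P x α := by
  refine ⟨hp.1.1, fun r hr => hx p hpx r hr, fun q hq hqq => hα _ hp.2.1 q ?_ hqq⟩
  exact hq.prefix_dropLast_of_ne fun hqp => hp.1.not_isQuery (hqp ▸ hqq)

theorem mem_play_of_mem_accS (hP : IsSDS P)
    (hx : ∀ r ∈ x, ∀ r', r' <+: r → IsResponse P r' → r' ∈ x)
    (hα : ∀ q ∈ α, ∀ q', q' <+: q → IsQuery P q' → q' ∈ α) {p : List (C ⊕ V)} (hpα : p ∈ α)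
    (hp : p ∈ AccS P x) : p ∈ play P x α := by
  refine ⟨hp.1.1, fun r hr hrr => ?_, fun q hq => hα p hpα q hq⟩
  have hrp : r <+: p.dropLast := hr.prefix_dropLast_of_ne fun hrp_eq => hrr.not_isQuery (hrp_eq ▸ hp.1)
  rcases hp.2.1 with h | h
  · exact absurd (List.prefix_nil.mp (h ▸ hrp)) (hP.1 r hrr.1)
  · exact hx _ h r hrp hrr

theorem snoc_not_mem_play_of_mem_accC (hP : IsSDS P) {p : List (C ⊕ V)} (hp : p ∈ AccC P α)
    (a : C ⊕ V) : p ++ [a] ∉ play P x α := by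
  intro h
  obtain ⟨c, rfl⟩ := (hP.2.1 _ h.1).exists_inl_of_snoc hp.1.2
  have hquery : IsQuery P (p ++ [Sum.inl c]) :=
    ⟨h.1, by simp only [List.length_append, List.length_singleton]; have := hp.1.2; omega⟩
  exact hp.2.2 c (h.2.2 _ List.prefix_rfl hquery)

theorem snoc_not_mem_play_of_mem_accS (hP : IsSDS P) {p : List (C ⊕ V)} (hp : p ∈ AccS P x)
    (a : C ⊕ V) : p ++ [a] ∉ play P x α := by
  intro h
  obtain ⟨v, rfl⟩ := (hP.2.1 _ h.1).exists_inr_of_snoc hp.1.2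
  have hresponse : IsResponse P (p ++ [Sum.inr v]) :=
    ⟨h.1, by simp only [List.length_append, List.length_singleton]; have := hp.1.2; omega⟩
  exact hp.2.2 v (h.2.1 _ List.prefix_rfl hresponse)

end Play

theorem play_max_characterization_general [DecidableEq C] [DecidableEq V]
    (P : Set (List (C ⊕ V))) (hP : IsSDS P)
    (x α : Set (List (C ⊕ V)))
    (hx : IsStrategy P x) (hα : IsCounterStrategy P α)
    (m : List (C ⊕ V)) (hm : m ∈ play P x α)
    (hmax : ∀ p ∈ play P x α, p <+: m) :
    (IsResponse P m → m ∈ x ∩ AccC P α ∧ ∀ p ∈ x ∩ AccC P α, p = m) ∧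
    (IsQuery P m → m ∈ α ∩ AccS P x ∧ ∀ p ∈ α ∩ AccS P x, p = m) := by
  constructor
  · intro hr
    refine ⟨⟨hm.2.1 m List.prefix_rfl hr, mem_accC_of_play_max hP hα.2.1 hm hmax hr⟩, ?_⟩
    rintro p ⟨hpx, hp⟩
    exact eq_of_mem_play_of_snoc_not_mem hP hm hmax
      (mem_play_of_mem_accC hx.2.1 hα.2.2.1 hpx hp) (snoc_not_mem_play_of_mem_accC hP hp)
  · intro hq
    refine ⟨⟨hm.2.2 m List.prefix_rfl hq, mem_accS_of_play_max hP hx.1 hm hmax hq⟩, ?_⟩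
    rintro p ⟨hpα, hp⟩
    exact eq_of_mem_play_of_snoc_not_mem hP hm hmax
      (mem_play_of_mem_accS hP hx.2.1 hα.2.2.1 hpα hp) (snoc_not_mem_play_of_mem_accS hP hp)

/-- The maximum of the play is the unique element of x ∩ A(α) if it is a
response, and the unique element of α ∩ A(x) if it is a query. -/
theorem play_max_characterization [DecidableEq C] [DecidableEq V]
    (P : Set (List (C ⊕ V))) (hP : IsSDS P)
    (x α : Set (List (C ⊕ V)))
    (hx : IsStrategy P x) (hα : IsCounterStrategy P α)
    (hfin : x.Finite ∨ α.Finite)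
    (m : List (C ⊕ V)) (hm : m ∈ play P x α)
    (hmax : ∀ p ∈ play P x α, p <+: m) :
    (IsResponse P m → m ∈ x ∩ AccC P α ∧ ∀ p ∈ x ∩ AccC P α, p = m) ∧
    (IsQuery P m → m ∈ α ∩ AccS P x ∧ ∀ p ∈ α ∩ AccS P x, p = m) :=
  play_max_characterization_general P hP x α hx hα m hm hmax
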